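/- Let f : ℝ → ℝ be nondecreasing and 1-Lipschitz. Then the symbol M_f(x,y) = √((f(x)-f(y))/(x-y)) (with M_f(x,x) := √(f'(x)) where defined, or any value in [0,1] on the diagonal) admits the factorization M_f(x,y) = ‖Λ(w_x) - Λ(w_y)‖ / ‖w_x - w_y‖ for x ≠ y, where w_x ∈ L²(ℝ) is the signed indicator of the interval between 0 and x, and Λ is multiplication by √(f'). -/

import Mathlib

open MeasureTheory

/-- The signed indicator `w_x` of the interval between `0` and `x`. -/
noncomputable def wInd (x : ℝ) : ℝ → ℝ :=
  fun t => if 0 ≤ t ∧ t < x then 1 else if x ≤ t ∧ t < 0 then -1 else 0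

open Filter Topology Set in
private lemma seq_slope {g : ℝ → ℝ} {c t : ℝ} (hg : HasDerivAt g c t) :
    Tendsto (fun n : ℕ => (g (t + ((n : ℝ) + 1)⁻¹) - g t) / ((n : ℝ) + 1)⁻¹)
      atTop (𝓝 c) := by
  have hu0 : Tendsto (fun n : ℕ => ((n : ℝ) + 1)⁻¹) atTop (𝓝 0) := by
    simpa [one_div] using tendsto_one_div_add_atTop_nhds_zero_nat (𝕜 := ℝ)
  have hmap : Tendsto (fun n : ℕ => t + ((n : ℝ) + 1)⁻¹) atTop (𝓝[≠] t) := by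
    rw [tendsto_nhdsWithin_iff]
    constructor
    · simpa using tendsto_const_nhds.add hu0
    · filter_upwards with n
      have h5 : (0:ℝ) < ((n : ℝ) + 1)⁻¹ := by positivity
      simp only [mem_compl_iff, mem_singleton_iff]
      intro h; nlinarith
  have h1 := (hasDerivAt_iff_tendsto_slope.mp hg).comp hmap
  convert h1 using 2 with n
  rw [Function.comp_apply, slope_def_field]
  congr 1
  ring

open Filter Topology Set in
private lemma ftc_aux (f : ℝ → ℝ) (hlip : LipschitzWith 1 f)
    (f' : ℝ → ℝ) (hderiv : ∀ᵐ t : ℝ, HasDerivAt f (f' t) t)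
    {x y : ℝ} (hyx : y < x) :
    ∫ t in Set.Ico y x, f' t = f x - f y := by
  classical
  have cf : Continuous f := hlip.continuous
  set u : ℕ → ℝ := fun n => ((n : ℝ) + 1)⁻¹ with hu
  have hupos : ∀ n, (0:ℝ) < u n := fun n => by positivity
  set F : ℕ → ℝ → ℝ := fun n t => (f (t + u n) - f t) / u n with hF
  have hDCT : Tendsto (fun n => ∫ t in Set.Ico y x, F n t) atTop
      (𝓝 (∫ t in Set.Ico y x, f' t)) := by
    refine tendsto_integral_of_dominated_convergence (fun _ => (1:ℝ)) ?_ ?_ ?_ ?_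
    · intro n
      exact (((cf.comp (continuous_id.add continuous_const)).sub cf).div_const
        _).aestronglyMeasurable.restrict
    · exact integrableOn_const measure_Ico_lt_top.ne
    · intro n
      filter_upwards with t
      have hd : dist (f (t + u n)) (f t) ≤ 1 * dist (t + u n) t := hlip.dist_le_mul _ _
      have h2 : |f (t + u n) - f t| ≤ u n := by
        rw [Real.dist_eq, Real.dist_eq] at hd
        simpa [abs_of_pos (hupos n)] using hd
      rw [hF]
      rw [Real.norm_eq_abs, abs_div, abs_of_pos (hupos n), div_le_one (hupos n)]
      exact h2
    · refine ae_restrict_of_ae ?_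
      filter_upwards [hderiv] with t ht
      exact seq_slope ht
  set Φ : ℝ → ℝ := fun v => ∫ s in (0:ℝ)..v, f s with hΦdef
  have hΦ : ∀ v : ℝ, HasDerivAt Φ (f v) v := fun v =>
    intervalIntegral.integral_hasDerivAt_right (cf.intervalIntegrable _ _)
      (cf.stronglyMeasurableAtFilter _ _) cf.continuousAt
  have hint : ∀ a b : ℝ, ∫ s in a..b, f s = Φ b - Φ a := by
    intro a b
    rw [hΦdef]
    rw [← intervalIntegral.integral_interval_sub_left (cf.intervalIntegrable _ _)
      (cf.intervalIntegrable _ _)]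
  have hval : ∀ n, ∫ t in Set.Ico y x, F n t =
      (Φ (x + u n) - Φ x) / u n - (Φ (y + u n) - Φ y) / u n := by
    intro n
    rw [integral_Ico_eq_integral_Ioo, ← integral_Ioc_eq_integral_Ioo,
      ← intervalIntegral.integral_of_le hyx.le]
    have hc1 : Continuous fun t : ℝ => f (t + u n) :=
      cf.comp (continuous_id.add continuous_const)
    have h1 : ∫ t in y..x, F n t = (∫ t in y..x, f (t + u n)) / u n
        - (∫ t in y..x, f t) / u n := by
      simp only [hF]
      rw [← sub_div, ← intervalIntegral.integral_sub (hc1.intervalIntegrable _ _)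
        (cf.intervalIntegrable _ _), intervalIntegral.integral_div]
    rw [h1, intervalIntegral.integral_comp_add_right, hint, hint]
    ring
  have hlim2 : Tendsto (fun n => ∫ t in Set.Ico y x, F n t) atTop (𝓝 (f x - f y)) := by
    simp only [hval]
    exact (seq_slope (hΦ x)).sub (seq_slope (hΦ y))
  exact tendsto_nhds_unique hDCT hlim2

private lemma wInd_diff {x y : ℝ} (h : y < x) (t : ℝ) :
    wInd x t - wInd y t = if y ≤ t ∧ t < x then 1 else 0 := by
  unfold wInd
  split_ifs <;> simp -failIfUnchanged only [not_and_or, not_le, not_lt] at * <;> norm_num <;>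
    (try casesm* _ ∨ _, _ ∧ _) <;> linarith

private lemma deriv_nonneg_of_monotone {f : ℝ → ℝ} (hmono : Monotone f) {c t : ℝ}
    (h : HasDerivAt f c t) : 0 ≤ c := by
  have h1 := hasDerivAt_iff_tendsto_slope.mp h
  refine ge_of_tendsto h1 ?_
  filter_upwards with u
  rw [slope_def_field, div_nonneg_iff]
  rcases le_total t u with hu | hu
  · exact Or.inl ⟨sub_nonneg.2 (hmono hu), sub_nonneg.2 hu⟩
  · exact Or.inr ⟨sub_nonpos.2 (hmono hu), sub_nonpos.2 hu⟩

open Set in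
private lemma main_aux
    (f : ℝ → ℝ) (hmono : Monotone f) (hlip : LipschitzWith 1 f)
    (f' : ℝ → ℝ) (hderiv : ∀ᵐ t : ℝ, HasDerivAt f (f' t) t)
    (Λ : (ℝ → ℝ) → (ℝ → ℝ))
    (hΛ : ∀ g : ℝ → ℝ, ∀ t : ℝ, Λ g t = Real.sqrt (f' t) * g t)
    {x y : ℝ} (hyx : y < x) :
    Real.sqrt ((f x - f y) / (x - y)) =
      Real.sqrt (∫ t : ℝ, (Λ (wInd x) t - Λ (wInd y) t) ^ 2) /
        Real.sqrt (∫ t : ℝ, (wInd x t - wInd y t) ^ 2) := by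
  classical
  have hf'0 : ∀ᵐ t : ℝ, 0 ≤ f' t := by
    filter_upwards [hderiv] with t ht
    exact deriv_nonneg_of_monotone hmono ht
  -- denominator integral
  have eA : (fun t : ℝ => (wInd x t - wInd y t) ^ 2) =
      Set.indicator (Set.Ico y x) (fun _ => (1:ℝ)) := by
    funext t
    rw [wInd_diff hyx]
    by_cases h : y ≤ t ∧ t < x <;> simp [Set.indicator, Set.mem_Ico, h]
  have hA : (∫ t : ℝ, (wInd x t - wInd y t) ^ 2) = x - y := by
    rw [eA, integral_indicator_const _ measurableSet_Ico]
    simp [Real.volume_Ico, ENNReal.toReal_ofReal (sub_nonneg.2 hyx.le), hyx.le]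
  -- numerator integral
  have hB : (∫ t : ℝ, (Λ (wInd x) t - Λ (wInd y) t) ^ 2) = f x - f y := by
    have hcongr : (fun t : ℝ => (Λ (wInd x) t - Λ (wInd y) t) ^ 2) =ᵐ[volume]
        Set.indicator (Set.Ico y x) f' := by
      filter_upwards [hf'0] with t ht
      rw [hΛ, hΛ, ← mul_sub, mul_pow, Real.sq_sqrt ht, wInd_diff hyx]
      by_cases h : y ≤ t ∧ t < x <;> simp [Set.indicator, Set.mem_Ico, h]
    rw [integral_congr_ae hcongr, integral_indicator measurableSet_Ico]
    exact ftc_aux f hlip f' hderiv hyx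
  rw [hA, hB, Real.sqrt_div (sub_nonneg.2 (hmono hyx.le))]

/-- For `f : ℝ → ℝ` nondecreasing and `1`-Lipschitz with a.e. derivative `f'`, the
square-root divided difference `M_f(x,y) = √((f(x)-f(y))/(x-y))` factors as a quotient
of Hilbert space norms: `M_f(x,y) = ‖Λ w_x - Λ w_y‖ / ‖w_x - w_y‖` for `x ≠ y`, where
`w_x ∈ L²(ℝ)` is the signed indicator of the interval between `0` and `x` and `Λ` is
pointwise multiplication by `√(f')`; the `L²`-norms are expressed via integrals. -/
theorem sqrt_divided_difference_factorization
    (f : ℝ → ℝ) (hmono : Monotone f) (hlip : LipschitzWith 1 f)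
    (f' : ℝ → ℝ) (hderiv : ∀ᵐ t : ℝ, HasDerivAt f (f' t) t)
    (Λ : (ℝ → ℝ) → (ℝ → ℝ))
    (hΛ : ∀ g : ℝ → ℝ, ∀ t : ℝ, Λ g t = Real.sqrt (f' t) * g t)
    (x y : ℝ) (hxy : x ≠ y) :
    Real.sqrt ((f x - f y) / (x - y)) =
      Real.sqrt (∫ t : ℝ, (Λ (wInd x) t - Λ (wInd y) t) ^ 2) /
        Real.sqrt (∫ t : ℝ, (wInd x t - wInd y t) ^ 2) := by
  rcases lt_or_gt_of_ne hxy with h | h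
  · have e1 : (fun t : ℝ => (Λ (wInd x) t - Λ (wInd y) t) ^ 2) =
        (fun t : ℝ => (Λ (wInd y) t - Λ (wInd x) t) ^ 2) := funext fun t => by ring
    have e2 : (fun t : ℝ => (wInd x t - wInd y t) ^ 2) =
        (fun t : ℝ => (wInd y t - wInd x t) ^ 2) := funext fun t => by ring
    have e3 : (f x - f y) / (x - y) = (f y - f x) / (y - x) := by
      rw [← neg_sub (f y), ← neg_sub y, neg_div_neg_eq]
    calc Real.sqrt ((f x - f y) / (x - y))
        = Real.sqrt ((f y - f x) / (y - x)) := by rw [e3]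
      _ = Real.sqrt (∫ t : ℝ, (Λ (wInd y) t - Λ (wInd x) t) ^ 2) /
            Real.sqrt (∫ t : ℝ, (wInd y t - wInd x t) ^ 2) :=
          main_aux f hmono hlip f' hderiv Λ hΛ h
      _ = _ := by rw [show (∫ t : ℝ, (Λ (wInd y) t - Λ (wInd x) t) ^ 2)
              = ∫ t : ℝ, (Λ (wInd x) t - Λ (wInd y) t) ^ 2 from by rw [e1],
            show (∫ t : ℝ, (wInd y t - wInd x t) ^ 2)
              = ∫ t : ℝ, (wInd x t - wInd y t) ^ 2 from by rw [e2]]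
  · exact main_aux f hmono hlip f' hderiv Λ hΛ h
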